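/- Let X be a set, let g₀ and g₁ be bijections of X, and suppose there exists a subset R ⊆ X such that: (1) g₀(R) is a proper subset of R; (2) g₁ is the identity on X ∖ R; (3) g₁ agrees with g₀ on g₀(R). Then the subgroup of the permutation group of X generated by g₀ and g₁ is isomorphic to Thompson's group F; more precisely, the homomorphism from the presented group ⟨x₀, x₁ | x₀²x₁x₀⁻² = (x₁x₀)x₁(x₁x₀)⁻¹, x₀³x₁x₀⁻³ = (x₁x₀²)x₁(x₁x₀²)⁻¹⟩ to the permutation group of X sending x₀ ↦ g₀ and x₁ ↦ g₁ is well defined and injective, with image the subgroup generated by g₀ and g₁. -/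

import Mathlib

open FreeGroup

/-- The two defining relators of Thompson's group `F` on generators `x₀ = of 0`,
`x₁ = of 1`:  `x₀²x₁x₀⁻² = (x₁x₀)x₁(x₁x₀)⁻¹` and `x₀³x₁x₀⁻³ = (x₁x₀²)x₁(x₁x₀²)⁻¹`. -/
def thompsonRels : Set (FreeGroup (Fin 2)) :=
  {(of 0) ^ 2 * of 1 * ((of 0) ^ 2)⁻¹ *
      ((of 1 * of 0) * of 1 * (of 1 * of 0)⁻¹)⁻¹,
    (of 0) ^ 3 * of 1 * ((of 0) ^ 3)⁻¹ *
      ((of 1 * (of 0) ^ 2) * of 1 * (of 1 * (of 0) ^ 2)⁻¹)⁻¹}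

namespace Stmt18Aux


variable {X : Type*} (g₀ g₁ : Equiv.Perm X) (R : Set X)

/-- The nested sets `Rₙ = g₀ⁿ(R)`. -/
def Rn : ℕ → Set X
  | 0 => R
  | n + 1 => ⇑g₀ '' Rn n

/-- The conjugated generators `hₙ = g₀ⁿ g₁ g₀⁻ⁿ`. -/
def hh (n : ℕ) : Equiv.Perm X := g₀ ^ n * g₁ * (g₀ ^ n)⁻¹

variable {g₀ g₁ R}

lemma Rn_succ (n : ℕ) : Rn g₀ R (n + 1) = ⇑g₀ '' Rn g₀ R n := rfl

lemma pow_comm_apply (n : ℕ) (y : X) : g₀ (⇑(g₀ ^ n) y) = ⇑(g₀ ^ n) (g₀ y) := by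
  calc g₀ (⇑(g₀ ^ n) y) = (g₀ * g₀ ^ n) y := rfl
    _ = (g₀ ^ n * g₀) y := by rw [(Commute.pow_right (Commute.refl g₀) n).eq]
    _ = ⇑(g₀ ^ n) (g₀ y) := rfl

lemma Rn_eq (n : ℕ) : Rn g₀ R n = ⇑(g₀ ^ n) '' R := by
  induction n with
  | zero => simp [Rn]
  | succ n ih =>
      rw [Rn_succ, ih, Set.image_image, pow_succ']
      simp [Set.image_image, Equiv.Perm.mul_apply]

lemma mem_Rn_iff {n : ℕ} {x : X} : x ∈ Rn g₀ R n ↔ (g₀ ^ n)⁻¹ x ∈ R := by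
  rw [Rn_eq]
  constructor
  · rintro ⟨y, hy, rfl⟩; simpa using hy
  · intro h; exact ⟨(g₀ ^ n)⁻¹ x, h, by simp⟩

section

variable (h1 : ⇑g₀ '' R ⊂ R) (h2 : ∀ x ∉ R, g₁ x = x) (h3 : ∀ x ∈ (⇑g₀) '' R, g₁ x = g₀ x)

include h1 in
lemma Rn_succ_subset (n : ℕ) : Rn g₀ R (n + 1) ⊆ Rn g₀ R n := by
  induction n with
  | zero => exact h1.subset
  | succ n ih => exact Set.image_mono ih

include h1 in
lemma Rn_succ_ssubset (n : ℕ) : Rn g₀ R (n + 1) ⊂ Rn g₀ R n := by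
  induction n with
  | zero => exact h1
  | succ n ih =>
      rw [Rn_succ, Rn_succ]
      constructor
      · exact Set.image_mono ih.subset
      · intro hcon
        exact ih.not_subset ((Set.image_subset_image_iff g₀.injective).1 hcon)

include h1 in
lemma Rn_antitone {m n : ℕ} (h : m ≤ n) : Rn g₀ R n ⊆ Rn g₀ R m := by
  induction n with
  | zero => simp [Nat.le_zero.1 h]
  | succ n ih =>
      rcases Nat.lt_or_ge m (n+1) with hlt | hge
      · exact (Rn_succ_subset h1 n).trans (ih (Nat.lt_succ_iff.1 hlt))
      · have : m = n + 1 := le_antisymm h hge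
        simp [this]

include h1 in
lemma Rn_diff_nonempty (n : ℕ) : ∃ y, y ∈ Rn g₀ R n ∧ y ∉ Rn g₀ R (n + 1) := by
  obtain ⟨y, hy1, hy2⟩ := Set.exists_of_ssubset (Rn_succ_ssubset h1 n)
  exact ⟨y, hy1, hy2⟩

include h2 in
lemma hh_apply_not_mem {n : ℕ} {x : X} (hx : x ∉ Rn g₀ R n) : hh g₀ g₁ n x = x := by
  have : (g₀ ^ n)⁻¹ x ∉ R := fun h => hx (mem_Rn_iff.2 h)
  simp only [hh, Equiv.Perm.mul_apply]
  rw [h2 _ this]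
  simp

include h3 in
lemma hh_apply_mem_succ {n : ℕ} {x : X} (hx : x ∈ Rn g₀ R (n + 1)) :
    hh g₀ g₁ n x = g₀ x := by
  rw [Rn_succ, Rn_eq] at hx
  obtain ⟨w, ⟨y, hy, rfl⟩, rfl⟩ := hx
  simp only [hh, Equiv.Perm.mul_apply]
  rw [pow_comm_apply]
  rw [show (g₀ ^ n)⁻¹ (⇑(g₀ ^ n) (g₀ y)) = g₀ y by simp]
  rw [h3 _ ⟨y, hy, rfl⟩]
  rw [← pow_comm_apply, ← pow_comm_apply]

include h2 in
lemma hh_mem_iff {n : ℕ} {x : X} : hh g₀ g₁ n x ∈ Rn g₀ R n ↔ x ∈ Rn g₀ R n := by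
  constructor
  · intro h
    by_contra hx
    rw [hh_apply_not_mem h2 hx] at h
    exact hx h
  · intro hx
    by_contra h
    have heq := hh_apply_not_mem h2 (n := n) h
    have : hh g₀ g₁ n x = x := (hh g₀ g₁ n).injective (by rw [heq])
    rw [this] at h
    exact h hx

include h3 in
lemma hh_mem_succ_mem {n : ℕ} {x : X} (hx : x ∈ Rn g₀ R (n + 1)) :
    hh g₀ g₁ n x ∈ Rn g₀ R (n + 2) := by
  rw [hh_apply_mem_succ h3 hx]
  exact ⟨x, hx, rfl⟩

include h3 in
lemma hh_not_mem_succ {n : ℕ} {x : X} (hx : x ∉ Rn g₀ R (n + 1)) :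
    hh g₀ g₁ n x ∉ Rn g₀ R (n + 2) := by
  intro h
  obtain ⟨y, hy, hxy⟩ := h
  have h1' : hh g₀ g₁ n y = g₀ y := hh_apply_mem_succ h3 hy
  have : y = x := (hh g₀ g₁ n).injective (by rw [h1', hxy])
  exact hx (this ▸ hy)

lemma hh_succ_eq (n : ℕ) : hh g₀ g₁ (n + 1) = g₀ * hh g₀ g₁ n * g₀⁻¹ := by
  simp only [hh, pow_succ']
  group

lemma hh_succ_apply (n : ℕ) (z : X) : hh g₀ g₁ (n + 1) (g₀ z) = g₀ (hh g₀ g₁ n z) := by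
  rw [hh_succ_eq]
  simp [Equiv.Perm.mul_apply]

include h1 h2 h3 in
/-- The key ping-pong relation: `hₘ hₙ hₘ⁻¹ = hₙ₊₁` for `m < n`. -/
lemma hh_rel {m n : ℕ} (hmn : m < n) :
    hh g₀ g₁ m * hh g₀ g₁ n * (hh g₀ g₁ m)⁻¹ = hh g₀ g₁ (n + 1) := by
  ext y
  simp only [Equiv.Perm.mul_apply]
  by_cases hy : y ∈ Rn g₀ R (n + 1)
  · -- y = g₀ z with z ∈ Rn n
    obtain ⟨z, hz, rfl⟩ := hy
    have hzm : z ∈ Rn g₀ R (m + 1) := Rn_antitone h1 hmn hz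
    have hinv : (hh g₀ g₁ m)⁻¹ (g₀ z) = z := by
      rw [← hh_apply_mem_succ h3 hzm, Equiv.Perm.coe_inv, Equiv.symm_apply_apply]
    rw [hinv]
    have hzn : hh g₀ g₁ n z ∈ Rn g₀ R n := (hh_mem_iff h2).2 hz
    rw [hh_apply_mem_succ h3 (Rn_antitone h1 hmn hzn)]
    rw [hh_succ_apply]
  · -- both sides fix y
    have hinvy : (hh g₀ g₁ m)⁻¹ y ∉ Rn g₀ R n := by
      intro hcon
      have : hh g₀ g₁ m ((hh g₀ g₁ m)⁻¹ y) = g₀ ((hh g₀ g₁ m)⁻¹ y) :=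
        hh_apply_mem_succ h3 (Rn_antitone h1 hmn hcon)
      rw [Equiv.Perm.coe_inv, Equiv.apply_symm_apply] at this
      exact hy (this ▸ ⟨_, hcon, rfl⟩)
    rw [hh_apply_not_mem h2 hinvy, Equiv.Perm.coe_inv, Equiv.apply_symm_apply]
    exact (hh_apply_not_mem h2 hy).symm

end

/-! ### Products of the `hₙ` over lists -/

variable (g₀ g₁) in
/-- The permutation given by a word in the `hₙ`. -/
def prodH (l : List ℕ) : Equiv.Perm X := (l.map (hh g₀ g₁)).prod

lemma prodH_nil : prodH g₀ g₁ ([] : List ℕ) = 1 := rfl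

lemma prodH_cons (n : ℕ) (l : List ℕ) :
    prodH g₀ g₁ (n :: l) = hh g₀ g₁ n * prodH g₀ g₁ l := by
  simp [prodH]

lemma prodH_concat (l : List ℕ) (n : ℕ) :
    prodH g₀ g₁ (l ++ [n]) = prodH g₀ g₁ l * hh g₀ g₁ n := by
  simp [prodH]

section

variable (h1 : ⇑g₀ '' R ⊂ R) (h2 : ∀ x ∉ R, g₁ x = x) (h3 : ∀ x ∈ (⇑g₀) '' R, g₁ x = g₀ x)

include h1 h2 in
/-- If every letter has index `≥ k` and `x ∉ Rₖ`, the word fixes `x`. -/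
lemma prodH_fix {k : ℕ} {l : List ℕ} (hl : ∀ j ∈ l, k ≤ j) {x : X}
    (hx : x ∉ Rn g₀ R k) : prodH g₀ g₁ l x = x := by
  induction l with
  | nil => rfl
  | cons a t ih =>
      rw [prodH_cons, Equiv.Perm.mul_apply, ih (fun j hj => hl j (List.mem_cons_of_mem a hj))]
      exact hh_apply_not_mem h2 (fun hcon => hx (Rn_antitone h1 (hl a (List.mem_cons_self)) hcon))

include h1 h2 h3 in
/-- If every letter has index `≥ m` and `x ∈ Rₘ₊₁`, the word keeps `x` in `Rₘ₊₁`. -/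
lemma prodH_keep {m : ℕ} {l : List ℕ} (hl : ∀ j ∈ l, m ≤ j) {x : X}
    (hx : x ∈ Rn g₀ R (m + 1)) : prodH g₀ g₁ l x ∈ Rn g₀ R (m + 1) := by
  induction l with
  | nil => exact hx
  | cons a t ih =>
      rw [prodH_cons, Equiv.Perm.mul_apply]
      have hx' := ih (fun j hj => hl j (List.mem_cons_of_mem a hj))
      set y := prodH g₀ g₁ t x with hy
      rcases Nat.lt_or_ge m a with hma | hma
      · -- a ≥ m + 1
        by_cases hya : y ∈ Rn g₀ R a
        · exact Rn_antitone h1 hma ((hh_mem_iff h2).2 hya)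
        · rw [hh_apply_not_mem h2 hya]; exact hx'
      · -- a = m
        have ha : a = m := le_antisymm hma (hl a (List.mem_cons_self))
        subst ha
        exact Rn_succ_subset h1 (a + 1) (hh_mem_succ_mem h3 hx')

include h1 h2 h3 in
/-- The key separation: a sorted nonempty word with minimum `m` moves the chosen
point into `Rₘ₊₁`, while the point itself is outside. -/
lemma prodH_sorted_move {l : List ℕ} {m : ℕ} (hl : ∀ j ∈ l, m ≤ j) :
    ∃ x, x ∉ Rn g₀ R (m + 1) ∧ prodH g₀ g₁ (l ++ [m]) x ∈ Rn g₀ R (m + 1) := by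
  obtain ⟨y, hy1, hy2⟩ := Rn_diff_nonempty h1 (m + 1)
  refine ⟨(hh g₀ g₁ m)⁻¹ y, ?_, ?_⟩
  · intro hcon
    exact hy2 (by simpa using hh_mem_succ_mem h3 hcon)
  · rw [prodH_concat, Equiv.Perm.mul_apply, Equiv.Perm.coe_inv, Equiv.apply_symm_apply]
    exact prodH_keep h1 h2 h3 hl hy1

lemma sorted_ge_append {t : List ℕ} {m : ℕ} (hs : List.Pairwise (· ≥ ·) (t ++ [m])) :
    (∀ j ∈ t, m ≤ j) ∧ List.Pairwise (· ≥ ·) t := by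
  rw [List.pairwise_append] at hs
  exact ⟨fun j hj => hs.2.2 j hj m (List.mem_singleton_self m), hs.1⟩

include h1 h2 h3 in
lemma prodH_ne_one {t : List ℕ} {m : ℕ} (hs : List.Pairwise (· ≥ ·) (t ++ [m])) :
    prodH g₀ g₁ (t ++ [m]) ≠ 1 := by
  intro heq
  obtain ⟨x, hx1, hx2⟩ := prodH_sorted_move h1 h2 h3 (sorted_ge_append hs).1
  rw [heq] at hx2
  exact hx1 hx2

include h1 h2 h3 in
lemma prodH_ne_of_lt {l₂ : List ℕ} {t₁ : List ℕ} {m₁ m₂ : ℕ}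
    (hs₁ : List.Pairwise (· ≥ ·) (t₁ ++ [m₁]))
    (hl₂ : ∀ j ∈ l₂, m₂ ≤ j) (hmm : m₁ < m₂) :
    prodH g₀ g₁ (t₁ ++ [m₁]) ≠ prodH g₀ g₁ l₂ := by
  intro heq
  obtain ⟨x, hx1, hx2⟩ := prodH_sorted_move h1 h2 h3 (sorted_ge_append hs₁).1
  have hfix : prodH g₀ g₁ l₂ x = x :=
    prodH_fix h1 h2 (fun j hj => le_trans hmm (hl₂ j hj)) hx1
  rw [heq, hfix] at hx2
  exact hx1 hx2

include h1 h2 h3 in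
/-- Uniqueness of sorted positive words: equal permutations give equal words. -/
lemma prodH_unique : ∀ (N : ℕ) (l₁ l₂ : List ℕ), l₁.length + l₂.length ≤ N →
    List.Pairwise (· ≥ ·) l₁ → List.Pairwise (· ≥ ·) l₂ →
    prodH g₀ g₁ l₁ = prodH g₀ g₁ l₂ → l₁ = l₂ := by
  intro N
  induction N with
  | zero =>
      intro l₁ l₂ hlen _ _ _
      have e1 : l₁ = [] := List.length_eq_zero_iff.1 (by omega)
      have e2 : l₂ = [] := List.length_eq_zero_iff.1 (by omega)
      rw [e1, e2]
  | succ N ih =>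
      intro l₁ l₂ hlen hs₁ hs₂ heq
      rcases List.eq_nil_or_concat l₁ with rfl | ⟨t₁, m₁, rfl⟩
      · rcases List.eq_nil_or_concat l₂ with rfl | ⟨t₂, m₂, rfl⟩
        · rfl
        · rw [List.concat_eq_append] at hs₂ heq
          exact absurd heq.symm (prodH_ne_one h1 h2 h3 hs₂)
      · rw [List.concat_eq_append] at hs₁ heq hlen
        rcases List.eq_nil_or_concat l₂ with rfl | ⟨t₂, m₂, rfl⟩
        · exact absurd heq (prodH_ne_one h1 h2 h3 hs₁)
        · rw [List.concat_eq_append] at hs₂ heq hlen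
          rcases Nat.lt_trichotomy m₁ m₂ with hmm | hmm | hmm
          · exact absurd heq
              (prodH_ne_of_lt h1 h2 h3 hs₁
                (fun j hj => by
                  rcases List.mem_append.1 hj with hj | hj
                  · exact (sorted_ge_append hs₂).1 j hj
                  · simp_all) hmm)
          · subst hmm
            have hcancel : prodH g₀ g₁ t₁ = prodH g₀ g₁ t₂ := by
              rw [prodH_concat, prodH_concat] at heq
              exact mul_right_cancel heq
            have := ih t₁ t₂ (by simp at hlen ⊢; omega)
              (sorted_ge_append hs₁).2 (sorted_ge_append hs₂).2 hcancel
            rw [this]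
          · exact absurd heq.symm
              (prodH_ne_of_lt h1 h2 h3 hs₂
                (fun j hj => by
                  rcases List.mem_append.1 hj with hj | hj
                  · exact (sorted_ge_append hs₁).1 j hj
                  · simp_all) hmm)

end



/-- The image of `x₀` in the presented group. -/
def aP : PresentedGroup thompsonRels := PresentedGroup.of 0

/-- The image of `x₁` in the presented group. -/
def bP : PresentedGroup thompsonRels := PresentedGroup.of 1

/-- The conjugates `Bₙ = aⁿ b a⁻ⁿ` in the presented group. -/
def B (n : ℕ) : PresentedGroup thompsonRels := aP ^ n * bP * (aP ^ n)⁻¹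

lemma mk_rel_one {r : FreeGroup (Fin 2)} (hr : r ∈ thompsonRels) :
    PresentedGroup.mk thompsonRels r = 1 := by
  have : r ∈ Subgroup.normalClosure thompsonRels := Subgroup.subset_normalClosure hr
  exact (QuotientGroup.eq_one_iff r).2 this

lemma rel1P : B 0 * B 1 * (B 0)⁻¹ = B 2 := by
  have h := mk_rel_one (show _ ∈ thompsonRels from Set.mem_insert _ _)
  simp only [_root_.map_mul, _root_.map_pow, _root_.map_inv] at h
  have h' : aP ^ 2 * bP * (aP ^ 2)⁻¹ = bP * aP * bP * (bP * aP)⁻¹ := by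
    rw [← mul_inv_eq_one]
    convert h using 2 <;> rfl
  simp only [B, pow_zero, pow_one, one_mul, inv_one, mul_one]
  rw [h']
  group

lemma rel2P : B 0 * B 2 * (B 0)⁻¹ = B 3 := by
  have h := mk_rel_one (show _ ∈ thompsonRels from
    Set.mem_insert_iff.2 (Or.inr rfl))
  simp only [_root_.map_mul, _root_.map_pow, _root_.map_inv] at h
  have h' : aP ^ 3 * bP * (aP ^ 3)⁻¹ = bP * aP ^ 2 * bP * (bP * aP ^ 2)⁻¹ := by
    rw [← mul_inv_eq_one]
    convert h using 2 <;> rfl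
  simp only [B, pow_zero, one_mul, inv_one, mul_one]
  rw [h']
  group

lemma shiftB (t n : ℕ) : aP ^ t * B n * (aP ^ t)⁻¹ = B (n + t) := by
  simp only [B, pow_add]
  group

lemma Brel_aux : ∀ k, ∀ m, B m * B (m + k + 1) * (B m)⁻¹ = B (m + k + 2) := by
  intro k
  induction k using Nat.strong_induction_on with
  | _ k ih =>
      match k with
      | 0 =>
          intro m
          have e0 := shiftB m 0
          have e1 := shiftB m 1
          have e2 := shiftB m 2
          rw [Nat.zero_add] at e0
          rw [show 1 + m = m + 1 by omega] at e1
          rw [show 2 + m = m + 2 by omega] at e2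
          show B m * B (m + 1) * (B m)⁻¹ = B (m + 2)
          rw [← e0, ← e1, ← e2, ← rel1P]
          group
      | 1 =>
          intro m
          have e0 := shiftB m 0
          have e2 := shiftB m 2
          have e3 := shiftB m 3
          rw [Nat.zero_add] at e0
          rw [show 2 + m = m + 2 by omega] at e2
          rw [show 3 + m = m + 3 by omega] at e3
          show B m * B (m + 2) * (B m)⁻¹ = B (m + 3)
          rw [← e0, ← e2, ← e3, ← rel2P]
          group
      | (k + 2) =>
          intro m
          have h1 : B (m + 1) * B (m + k + 2) * (B (m + 1))⁻¹ = B (m + k + 3) := by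
            have h := ih k (by omega) (m + 1)
            rw [show m + 1 + k + 1 = m + k + 2 by omega,
              show m + 1 + k + 2 = m + k + 3 by omega] at h
            exact h
          have h2 : B m * B (m + k + 2) * (B m)⁻¹ = B (m + k + 3) := by
            have h := ih (k + 1) (by omega) m
            rw [show m + (k + 1) + 1 = m + k + 2 by omega,
              show m + (k + 1) + 2 = m + k + 3 by omega] at h
            exact h
          have h3 : B m * B (m + 1) * (B m)⁻¹ = B (m + 2) := by
            have h := ih 0 (by omega) m
            rw [show m + 0 + 1 = m + 1 by omega, show m + 0 + 2 = m + 2 by omega] at h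
            exact h
          have h4 : B (m + 2) * B (m + k + 3) * (B (m + 2))⁻¹ = B (m + k + 4) := by
            have h := ih k (by omega) (m + 2)
            rw [show m + 2 + k + 1 = m + k + 3 by omega,
              show m + 2 + k + 2 = m + k + 4 by omega] at h
            exact h
          have e : m + (k + 2) + 1 = m + k + 3 := by omega
          have e' : m + (k + 2) + 2 = m + k + 4 := by omega
          rw [e, e', ← h1]
          calc B m * (B (m + 1) * B (m + k + 2) * (B (m + 1))⁻¹) * (B m)⁻¹
              = (B m * B (m + 1) * (B m)⁻¹) * (B m * B (m + k + 2) * (B m)⁻¹) *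
                  (B m * B (m + 1) * (B m)⁻¹)⁻¹ := by group
            _ = B (m + 2) * B (m + k + 3) * (B (m + 2))⁻¹ := by rw [h3, h2]
            _ = B (m + k + 4) := h4

/-- The full family of relations among the `Bₙ`. -/
lemma Brel {m n : ℕ} (h : m < n) : B m * B n * (B m)⁻¹ = B (n + 1) := by
  have := Brel_aux (n - m - 1) m
  rw [show m + (n - m - 1) + 1 = n by omega, show m + (n - m - 1) + 2 = n + 1 by omega] at this
  exact this

lemma Bcomm {m n : ℕ} (h : m < n) : B m * B n = B (n + 1) * B m := by
  have := Brel h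
  rw [← this]
  group

lemma BmoveL {k n : ℕ} (h : k < n) : B k * (B n)⁻¹ = (B (n + 1))⁻¹ * B k := by
  have := Brel h
  rw [← this]
  group

lemma BmoveR {k n : ℕ} (h : n < k) : B k * (B n)⁻¹ = (B n)⁻¹ * B (k + 1) := by
  have := Brel h
  rw [← this]
  group

/-- The product of a positive word in the `Bₙ`. -/
def prodB (l : List ℕ) : PresentedGroup thompsonRels := (l.map B).prod

lemma prodB_nil : prodB [] = 1 := rfl

lemma prodB_cons (n : ℕ) (l : List ℕ) : prodB (n :: l) = B n * prodB l := by
  simp [prodB]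

lemma prodB_append (l₁ l₂ : List ℕ) : prodB (l₁ ++ l₂) = prodB l₁ * prodB l₂ := by
  simp [prodB]

lemma shiftL (t : ℕ) (l : List ℕ) :
    aP ^ t * prodB l = prodB (l.map (· + t)) * aP ^ t := by
  induction l with
  | nil => simp [prodB]
  | cons n l ih =>
      rw [prodB_cons, List.map_cons, prodB_cons, ← mul_assoc]
      have : aP ^ t * B n = B (n + t) * aP ^ t := by
        have := shiftB t n
        rw [← this]; group
      rw [this, mul_assoc, ih, ← mul_assoc]

lemma shiftLinv (t : ℕ) (l : List ℕ) :
    aP ^ t * (prodB l)⁻¹ = (prodB (l.map (· + t)))⁻¹ * aP ^ t := by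
  have h := shiftL t l
  have : (prodB (l.map (· + t)))⁻¹ * (aP ^ t * prodB l) * (prodB l)⁻¹ =
      (prodB (l.map (· + t)))⁻¹ * (prodB (l.map (· + t)) * aP ^ t) * (prodB l)⁻¹ := by rw [h]
  calc aP ^ t * (prodB l)⁻¹
      = (prodB (l.map (· + t)))⁻¹ * (prodB (l.map (· + t)) * aP ^ t) * (prodB l)⁻¹ := by group
    _ = (prodB (l.map (· + t)))⁻¹ * (aP ^ t * prodB l) * (prodB l)⁻¹ := by rw [h]
    _ = (prodB (l.map (· + t)))⁻¹ * aP ^ t := by group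

/-- Moving a single inverse generator left through a positive word. -/
lemma moveB : ∀ (l : List ℕ) (n : ℕ),
    (∃ l', prodB l * (B n)⁻¹ = prodB l') ∨
    (∃ n' l', prodB l * (B n)⁻¹ = (B n')⁻¹ * prodB l') := by
  intro l
  induction l with
  | nil =>
      intro n
      exact Or.inr ⟨n, [], by simp [prodB]⟩
  | cons k t ih =>
      intro n
      rcases ih n with ⟨l', hl'⟩ | ⟨n', l', hl'⟩
      · exact Or.inl ⟨k :: l', by rw [prodB_cons, mul_assoc, hl', prodB_cons]⟩
      · rcases Nat.lt_trichotomy k n' with hkn | hkn | hkn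
        · refine Or.inr ⟨n' + 1, k :: l', ?_⟩
          rw [prodB_cons, mul_assoc, hl', ← mul_assoc, BmoveL hkn, prodB_cons, mul_assoc]
        · subst hkn
          refine Or.inl ⟨l', ?_⟩
          rw [prodB_cons, mul_assoc, hl', ← mul_assoc, mul_inv_cancel, one_mul]
        · refine Or.inr ⟨n', (k + 1) :: l', ?_⟩
          rw [prodB_cons, mul_assoc, hl', ← mul_assoc, BmoveR hkn, prodB_cons, mul_assoc]

/-- Ore-type fraction lemma: a positive word times the inverse of a positive word
is a left fraction. -/
lemma fracB : ∀ (s l : List ℕ), ∃ q p, prodB l * (prodB s)⁻¹ = (prodB q)⁻¹ * prodB p := by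
  intro s
  induction s with
  | nil =>
      intro l
      exact ⟨[], l, by simp [prodB]⟩
  | cons n s ih =>
      intro l
      obtain ⟨q₁, p₁, h₁⟩ := ih l
      have : prodB l * (prodB (n :: s))⁻¹ = ((prodB q₁)⁻¹ * prodB p₁) * (B n)⁻¹ := by
        rw [← h₁, prodB_cons]
        group
      rcases moveB p₁ n with ⟨l', hl'⟩ | ⟨n', l', hl'⟩
      · exact ⟨q₁, l', by rw [this, mul_assoc, hl']⟩
      · refine ⟨n' :: q₁, l', ?_⟩
        rw [this, mul_assoc, hl', prodB_cons]
        group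

/-! ### Normal forms -/

/-- `w` has a (weak) normal form `aᴶ q⁻¹ p aᴷ` with `p, q` positive words. -/
def NF (w : PresentedGroup thompsonRels) : Prop :=
  ∃ (J K : ℤ) (q p : List ℕ), w = aP ^ J * (prodB q)⁻¹ * prodB p * aP ^ K

lemma shiftL' (t : ℕ) (l : List ℕ) :
    prodB l * aP ^ (-(t : ℤ)) = aP ^ (-(t : ℤ)) * prodB (l.map (· + t)) := by
  have h := shiftL t l
  calc prodB l * aP ^ (-(t : ℤ))
      = aP ^ (-(t : ℤ)) * ((aP ^ t * prodB l) * aP ^ (-(t:ℤ)) * aP ^ ((t:ℤ)) * aP^(-(t:ℤ))) := by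
        rw [← zpow_natCast aP t]; group
    _ = aP ^ (-(t : ℤ)) * ((prodB (l.map (· + t)) * aP ^ t) * aP ^ (-(t:ℤ)) * aP ^ ((t:ℤ)) * aP^(-(t:ℤ))) := by rw [h]
    _ = aP ^ (-(t : ℤ)) * prodB (l.map (· + t)) := by rw [← zpow_natCast aP t]; group

lemma shiftLinv' (t : ℕ) (l : List ℕ) :
    (prodB l)⁻¹ * aP ^ (-(t : ℤ)) = aP ^ (-(t : ℤ)) * (prodB (l.map (· + t)))⁻¹ := by
  have h := shiftL' t l
  calc (prodB l)⁻¹ * aP ^ (-(t : ℤ))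
      = (prodB l)⁻¹ * (aP ^ (-(t:ℤ)) * prodB (l.map (· + t))) * (prodB (l.map (· + t)))⁻¹ := by
        group
    _ = (prodB l)⁻¹ * (prodB l * aP ^ (-(t:ℤ))) * (prodB (l.map (· + t)))⁻¹ := by rw [h]
    _ = aP ^ (-(t : ℤ)) * (prodB (l.map (· + t)))⁻¹ := by group

lemma NF.one : NF 1 := ⟨0, 0, [], [], by simp [prodB]⟩

lemma NF.inv {w : PresentedGroup thompsonRels} (h : NF w) : NF w⁻¹ := by
  obtain ⟨J, K, q, p, rfl⟩ := h
  exact ⟨-K, -J, p, q, by group⟩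

lemma NF.mul_zpow {w : PresentedGroup thompsonRels} (h : NF w) (c : ℤ) : NF (w * aP ^ c) := by
  obtain ⟨J, K, q, p, rfl⟩ := h
  exact ⟨J, K + c, q, p, by rw [zpow_add]; group⟩

lemma NF.mul_prodB {w : PresentedGroup thompsonRels} (h : NF w) (s : List ℕ) :
    NF (w * prodB s) := by
  obtain ⟨J, K, q, p, rfl⟩ := h
  rcases le_or_gt 0 K with hK | hK
  · obtain ⟨t, rfl⟩ := Int.eq_ofNat_of_zero_le hK
    have hs := shiftL t s
    refine ⟨J, (t : ℤ), q, p ++ s.map (· + t), ?_⟩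
    rw [prodB_append]
    calc aP ^ J * (prodB q)⁻¹ * prodB p * aP ^ (t : ℤ) * prodB s
        = aP ^ J * (prodB q)⁻¹ * prodB p * (aP ^ t * prodB s) := by
          rw [← zpow_natCast aP t]; group
      _ = aP ^ J * (prodB q)⁻¹ * prodB p * (prodB (s.map (· + t)) * aP ^ t) := by rw [hs]
      _ = aP ^ J * (prodB q)⁻¹ * (prodB p * prodB (s.map (· + t))) * aP ^ (t : ℤ) := by
          rw [← zpow_natCast aP t]; group
  · obtain ⟨t, rfl⟩ : ∃ t : ℕ, K = -(t : ℤ) := ⟨(-K).toNat, by omega⟩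
    refine ⟨J + -(t : ℤ), 0, q.map (· + t), (p.map (· + t)) ++ s, ?_⟩
    rw [prodB_append]
    calc aP ^ J * (prodB q)⁻¹ * prodB p * aP ^ (-(t:ℤ)) * prodB s
        = aP ^ J * (prodB q)⁻¹ * (prodB p * aP ^ (-(t:ℤ))) * prodB s := by group
      _ = aP ^ J * (prodB q)⁻¹ * (aP ^ (-(t:ℤ)) * prodB (p.map (· + t))) * prodB s := by
          rw [shiftL']
      _ = aP ^ J * ((prodB q)⁻¹ * aP ^ (-(t:ℤ))) * prodB (p.map (· + t)) * prodB s := by group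
      _ = aP ^ J * (aP ^ (-(t:ℤ)) * (prodB (q.map (· + t)))⁻¹) * prodB (p.map (· + t)) * prodB s := by
          rw [shiftLinv']
      _ = aP ^ (J + -(t:ℤ)) * (prodB (q.map (· + t)))⁻¹ * (prodB (p.map (· + t)) * prodB s) * aP ^ (0:ℤ) := by
          rw [zpow_add]; group

lemma NF.mul_prodB_inv {w : PresentedGroup thompsonRels} (h : NF w) (s : List ℕ) :
    NF (w * (prodB s)⁻¹) := by
  obtain ⟨J, K, q, p, rfl⟩ := h
  rcases le_or_gt 0 K with hK | hK
  · obtain ⟨t, rfl⟩ := Int.eq_ofNat_of_zero_le hK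
    have hs := shiftLinv t s
    obtain ⟨q₃, p₃, hfrac⟩ := fracB (s.map (· + t)) p
    refine ⟨J, (t : ℤ), q₃ ++ q, p₃, ?_⟩
    rw [prodB_append]
    calc aP ^ J * (prodB q)⁻¹ * prodB p * aP ^ (t : ℤ) * (prodB s)⁻¹
        = aP ^ J * (prodB q)⁻¹ * prodB p * (aP ^ t * (prodB s)⁻¹) := by
          rw [← zpow_natCast aP t]; group
      _ = aP ^ J * (prodB q)⁻¹ * prodB p * ((prodB (s.map (· + t)))⁻¹ * aP ^ t) := by rw [hs]
      _ = aP ^ J * (prodB q)⁻¹ * (prodB p * (prodB (s.map (· + t)))⁻¹) * aP ^ (t : ℤ) := by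
          rw [← zpow_natCast aP t]; group
      _ = aP ^ J * (prodB q)⁻¹ * ((prodB q₃)⁻¹ * prodB p₃) * aP ^ (t : ℤ) := by rw [hfrac]
      _ = aP ^ J * (prodB q₃ * prodB q)⁻¹ * prodB p₃ * aP ^ (t : ℤ) := by group
  · obtain ⟨t, rfl⟩ : ∃ t : ℕ, K = -(t : ℤ) := ⟨(-K).toNat, by omega⟩
    obtain ⟨q₃, p₃, hfrac⟩ := fracB s (p.map (· + t))
    refine ⟨J + -(t : ℤ), 0, q₃ ++ q.map (· + t), p₃, ?_⟩
    rw [prodB_append]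
    calc aP ^ J * (prodB q)⁻¹ * prodB p * aP ^ (-(t:ℤ)) * (prodB s)⁻¹
        = aP ^ J * (prodB q)⁻¹ * (prodB p * aP ^ (-(t:ℤ))) * (prodB s)⁻¹ := by group
      _ = aP ^ J * (prodB q)⁻¹ * (aP ^ (-(t:ℤ)) * prodB (p.map (· + t))) * (prodB s)⁻¹ := by
          rw [shiftL']
      _ = aP ^ J * ((prodB q)⁻¹ * aP ^ (-(t:ℤ))) * (prodB (p.map (· + t)) * (prodB s)⁻¹) := by group
      _ = aP ^ J * (aP ^ (-(t:ℤ)) * (prodB (q.map (· + t)))⁻¹) * ((prodB q₃)⁻¹ * prodB p₃) := by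
          rw [shiftLinv', hfrac]
      _ = aP ^ (J + -(t:ℤ)) * (prodB q₃ * prodB (q.map (· + t)))⁻¹ * prodB p₃ * aP ^ (0:ℤ) := by
          rw [zpow_add]; group

lemma NF.mul {w₁ w₂ : PresentedGroup thompsonRels} (h₁ : NF w₁) (h₂ : NF w₂) :
    NF (w₁ * w₂) := by
  obtain ⟨J, K, q, p, rfl⟩ := h₂
  have e : w₁ * (aP ^ J * (prodB q)⁻¹ * prodB p * aP ^ K) =
      (((w₁ * aP ^ J) * (prodB q)⁻¹) * prodB p) * aP ^ K := by group
  rw [e]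
  exact (((h₁.mul_zpow J).mul_prodB_inv q).mul_prodB p).mul_zpow K

/-- The subgroup of elements admitting a normal form. -/
def NFsub : Subgroup (PresentedGroup thompsonRels) where
  carrier := {w | NF w}
  one_mem' := NF.one
  mul_mem' := fun h₁ h₂ => NF.mul h₁ h₂
  inv_mem' := fun h => NF.inv h

lemma NF_all (w : PresentedGroup thompsonRels) : NF w := by
  have : w ∈ NFsub := by
    apply PresentedGroup.generated_by
    intro j
    fin_cases j
    · show NF aP
      exact ⟨1, 0, [], [], by simp [prodB]⟩
    · show NF bP
      refine ⟨0, 0, [], [0], ?_⟩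
      simp [prodB, B]
  exact this

/-! ### Sorting positive words -/

/-- Insert a letter into a word, using the relations to keep it non-increasing. -/
def ins (n : ℕ) : List ℕ → List ℕ
  | [] => [n]
  | k :: t => if k ≤ n then n :: k :: t else (k + 1) :: ins n t

lemma ins_mem (n : ℕ) : ∀ (l : List ℕ), ∀ z ∈ ins n l, z = n ∨ ∃ k ∈ l, z = k ∨ z = k + 1 := by
  intro l
  induction l with
  | nil => intro z hz; simp [ins] at hz; exact Or.inl hz
  | cons k t ih =>
      intro z hz
      by_cases hkn : k ≤ n
      · simp only [ins, if_pos hkn, List.mem_cons] at hz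
        rcases hz with rfl | rfl | hz
        · exact Or.inl rfl
        · exact Or.inr ⟨z, List.mem_cons_self, Or.inl rfl⟩
        · exact Or.inr ⟨z, List.mem_cons_of_mem _ hz, Or.inl rfl⟩
      · simp only [ins, if_neg hkn, List.mem_cons] at hz
        rcases hz with rfl | hz
        · exact Or.inr ⟨k, List.mem_cons_self, Or.inr rfl⟩
        · rcases ih z hz with h | ⟨k', hk', h⟩
          · exact Or.inl h
          · exact Or.inr ⟨k', List.mem_cons_of_mem _ hk', h⟩

lemma ins_sorted (n : ℕ) : ∀ (l : List ℕ), List.Pairwise (· ≥ ·) l →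
    List.Pairwise (· ≥ ·) (ins n l) := by
  intro l
  induction l with
  | nil => intro _; simp [ins]
  | cons k t ih =>
      intro hs
      rw [List.pairwise_cons] at hs
      by_cases hkn : k ≤ n
      · show List.Pairwise _ (if k ≤ n then n :: k :: t else (k + 1) :: ins n t)
        rw [if_pos hkn, List.pairwise_cons]
        refine ⟨?_, List.pairwise_cons.2 hs⟩
        intro b hb
        rcases List.mem_cons.1 hb with rfl | hb
        · exact hkn
        · exact le_trans (hs.1 b hb) hkn
      · show List.Pairwise _ (if k ≤ n then n :: k :: t else (k + 1) :: ins n t)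
        rw [if_neg hkn, List.pairwise_cons]
        refine ⟨?_, ih hs.2⟩
        intro b hb
        rcases ins_mem n t b hb with rfl | ⟨k', hk', h⟩
        · omega
        · have := hs.1 k' hk'
          omega

lemma prodB_ins (n : ℕ) : ∀ (l : List ℕ), prodB (ins n l) = B n * prodB l := by
  intro l
  induction l with
  | nil => simp [ins, prodB]
  | cons k t ih =>
      by_cases hkn : k ≤ n
      · show prodB (if k ≤ n then n :: k :: t else (k + 1) :: ins n t) = _
        rw [if_pos hkn, prodB_cons]
      · show prodB (if k ≤ n then n :: k :: t else (k + 1) :: ins n t) = _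
        rw [if_neg hkn, prodB_cons, ih, prodB_cons, ← mul_assoc, ← mul_assoc,
          ← Bcomm (by omega : n < k)]

/-- Insertion sort of a positive word. -/
def sortL : List ℕ → List ℕ
  | [] => []
  | n :: t => ins n (sortL t)

lemma sortL_sorted : ∀ (l : List ℕ), List.Pairwise (· ≥ ·) (sortL l)
  | [] => by simp [sortL]
  | n :: t => ins_sorted n _ (sortL_sorted t)

lemma prodB_sortL : ∀ (l : List ℕ), prodB (sortL l) = prodB l
  | [] => rfl
  | n :: t => by rw [sortL, prodB_ins, prodB_sortL t, prodB_cons]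


/-! ### Further dynamical consequences -/

section Glue

variable {X : Type*} {g₀ g₁ : Equiv.Perm X} {R : Set X}
variable (h1 : ⇑g₀ '' R ⊂ R) (h2 : ∀ x ∉ R, g₁ x = x) (h3 : ∀ x ∈ (⇑g₀) '' R, g₁ x = g₀ x)

include h1 h2 in
lemma prodH_memR {l : List ℕ} {x : X} : prodH g₀ g₁ l x ∈ R ↔ x ∈ R := by
  induction l with
  | nil => simp [prodH]
  | cons n t ih =>
      rw [prodH_cons, Equiv.Perm.mul_apply, ← ih]
      set y := prodH g₀ g₁ t x
      constructor
      · intro h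
        by_contra hy
        have : y ∉ Rn g₀ R n := fun hc => hy (Rn_antitone h1 (Nat.zero_le n) hc)
        rw [hh_apply_not_mem h2 this] at h
        exact hy h
      · intro hy
        by_cases hyn : y ∈ Rn g₀ R n
        · exact Rn_antitone h1 (Nat.zero_le n) ((hh_mem_iff h2).2 hyn)
        · rwa [hh_apply_not_mem h2 hyn]

include h1 h2 in
lemma prodH_image (l : List ℕ) : prodH g₀ g₁ l '' R = R := by
  ext z
  constructor
  · rintro ⟨x, hx, rfl⟩
    exact (prodH_memR h1 h2).2 hx
  · intro hz
    refine ⟨(prodH g₀ g₁ l)⁻¹ z, ?_, by simp⟩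
    have : prodH g₀ g₁ l ((prodH g₀ g₁ l)⁻¹ z) ∈ R := by simpa using hz
    exact (prodH_memR h1 h2).1 this

include h1 h2 in
lemma stepA {e : ℕ} {p q : List ℕ}
    (heq : prodH g₀ g₁ p * g₀ ^ e = prodH g₀ g₁ q) : e = 0 := by
  by_contra he
  have himg : (⇑(prodH g₀ g₁ p * g₀ ^ e)) '' R = (⇑(prodH g₀ g₁ q)) '' R := by rw [heq]
  rw [prodH_image h1 h2] at himg
  have hcomp : (⇑(prodH g₀ g₁ p * g₀ ^ e)) '' R = prodH g₀ g₁ p '' (⇑(g₀ ^ e) '' R) := by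
    rw [← Set.image_comp]; rfl
  rw [hcomp, ← Rn_eq] at himg
  have hRe : Rn g₀ R e = R := by
    have himg2 : ⇑(prodH g₀ g₁ p) '' Rn g₀ R e = ⇑(prodH g₀ g₁ p) '' R := by
      rw [himg, prodH_image h1 h2]
    exact (Set.image_eq_image (prodH g₀ g₁ p).injective).1 himg2
  have h1e : 1 ≤ e := Nat.one_le_iff_ne_zero.2 he
  have hsub : Rn g₀ R e ⊆ Rn g₀ R 1 := Rn_antitone h1 h1e
  have hss : Rn g₀ R 1 ⊂ Rn g₀ R 0 := Rn_succ_ssubset h1 0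
  rw [hRe] at hsub
  exact hss.not_subset hsub

include h1 h2 h3 in
lemma hrel_aux : ∀ r ∈ thompsonRels, FreeGroup.lift ![g₀, g₁] r = 1 := by
  have key1 := hh_rel h1 h2 h3 (show 0 < 1 by norm_num)
  have key2 := hh_rel h1 h2 h3 (show 0 < 2 by norm_num)
  simp only [hh, pow_zero, pow_one, one_mul, inv_one, mul_one] at key1 key2
  intro r hr
  rcases hr with rfl | hr
  · simp only [_root_.map_mul, _root_.map_pow, _root_.map_inv, FreeGroup.lift_apply_of,
      Matrix.cons_val_zero, Matrix.cons_val_one, Matrix.head_cons]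
    rw [← key1]
    group
  · rw [Set.mem_singleton_iff] at hr
    subst hr
    simp only [_root_.map_mul, _root_.map_pow, _root_.map_inv, FreeGroup.lift_apply_of,
      Matrix.cons_val_zero, Matrix.cons_val_one, Matrix.head_cons]
    rw [← key2]
    group

end Glue

end Stmt18Aux

/-- Ping-pong lemma for Thompson's group `F`: if bijections `g₀, g₁`
of a set `X` and a subset `R ⊆ X` satisfy (1) `g₀(R) ⊊ R`, (2) `g₁` is the identity off
`R`, and (3) `g₁ = g₀` on `g₀(R)`, then `x₀ ↦ g₀`, `x₁ ↦ g₁` defines a homomorphism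
from the presented group `F` to the permutation group of `X` which is injective, with
image the subgroup generated by `g₀` and `g₁`. -/
theorem stmt18 {X : Type*} (g₀ g₁ : Equiv.Perm X) (R : Set X)
    (h1 : (⇑g₀) '' R ⊂ R) (h2 : ∀ x ∉ R, g₁ x = x)
    (h3 : ∀ x ∈ (⇑g₀) '' R, g₁ x = g₀ x) :
    ∃ hrel : ∀ r ∈ thompsonRels, FreeGroup.lift ![g₀, g₁] r = 1,
      Function.Injective (PresentedGroup.toGroup hrel) ∧
        (PresentedGroup.toGroup hrel).range = Subgroup.closure {g₀, g₁} := by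
  classical
  open Stmt18Aux in
  refine ⟨hrel_aux h1 h2 h3, ?_, ?_⟩
  · -- injectivity
    set φ := PresentedGroup.toGroup (hrel_aux h1 h2 h3) with hφ
    have φa : φ Stmt18Aux.aP = g₀ := by
      simp [hφ, Stmt18Aux.aP, PresentedGroup.toGroup.of]
    have φb : φ Stmt18Aux.bP = g₁ := by
      simp [hφ, Stmt18Aux.bP, PresentedGroup.toGroup.of]
    have φB : ∀ n, φ (Stmt18Aux.B n) = Stmt18Aux.hh g₀ g₁ n := by
      intro n
      simp [Stmt18Aux.B, Stmt18Aux.hh, map_mul, map_pow, map_inv, φa, φb]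
    have φprod : ∀ l, φ (Stmt18Aux.prodB l) = Stmt18Aux.prodH g₀ g₁ l := by
      intro l
      rw [Stmt18Aux.prodB, Stmt18Aux.prodH, map_list_prod, List.map_map]
      congr 1
      exact List.map_congr_left fun n _ => φB n
    rw [injective_iff_map_eq_one]
    intro w hw
    obtain ⟨J, K, q, p, rfl⟩ := Stmt18Aux.NF_all w
    simp only [_root_.map_mul, _root_.map_zpow, _root_.map_inv, φa, φprod] at hw
    have hpq : Stmt18Aux.prodH g₀ g₁ p * g₀ ^ (K + J) = Stmt18Aux.prodH g₀ g₁ q := by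
      calc Stmt18Aux.prodH g₀ g₁ p * g₀ ^ (K + J)
          = Stmt18Aux.prodH g₀ g₁ q * g₀ ^ (-J) *
              (g₀ ^ J * (Stmt18Aux.prodH g₀ g₁ q)⁻¹ * Stmt18Aux.prodH g₀ g₁ p * g₀ ^ K) *
              g₀ ^ J := by rw [zpow_add, zpow_neg]; group
        _ = Stmt18Aux.prodH g₀ g₁ q * g₀ ^ (-J) * 1 * g₀ ^ J := by rw [hw]
        _ = Stmt18Aux.prodH g₀ g₁ q := by rw [zpow_neg]; group
    have hKJ : K + J = 0 := by
      rcases le_or_gt 0 (K + J) with hc | hc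
      · obtain ⟨e, he⟩ : ∃ e : ℕ, K + J = (e : ℤ) := ⟨(K + J).toNat, by omega⟩
        rw [he, zpow_natCast] at hpq
        have := Stmt18Aux.stepA h1 h2 hpq
        omega
      · obtain ⟨e, he⟩ : ∃ e : ℕ, -(K + J) = (e : ℤ) := ⟨(-(K + J)).toNat, by omega⟩
        have hpq' : Stmt18Aux.prodH g₀ g₁ q * g₀ ^ (e : ℤ) = Stmt18Aux.prodH g₀ g₁ p := by
          rw [← he]
          calc Stmt18Aux.prodH g₀ g₁ q * g₀ ^ (-(K + J))
              = (Stmt18Aux.prodH g₀ g₁ p * g₀ ^ (K + J)) * g₀ ^ (-(K + J)) := by rw [hpq]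
            _ = Stmt18Aux.prodH g₀ g₁ p := by rw [zpow_neg]; group
        rw [zpow_natCast] at hpq'
        have := Stmt18Aux.stepA h1 h2 hpq'
        omega
    rw [hKJ, zpow_zero, mul_one] at hpq
    -- sorted versions agree
    have hsort : Stmt18Aux.prodH g₀ g₁ (Stmt18Aux.sortL p) = Stmt18Aux.prodH g₀ g₁ p := by
      rw [← φprod, ← φprod, Stmt18Aux.prodB_sortL]
    have hsort' : Stmt18Aux.prodH g₀ g₁ (Stmt18Aux.sortL q) = Stmt18Aux.prodH g₀ g₁ q := by
      rw [← φprod, ← φprod, Stmt18Aux.prodB_sortL]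
    have heq : Stmt18Aux.sortL p = Stmt18Aux.sortL q := by
      refine Stmt18Aux.prodH_unique h1 h2 h3
        ((Stmt18Aux.sortL p).length + (Stmt18Aux.sortL q).length) _ _ le_rfl
        (Stmt18Aux.sortL_sorted p) (Stmt18Aux.sortL_sorted q) ?_
      rw [hsort, hsort', hpq]
    have hpB : Stmt18Aux.prodB p = Stmt18Aux.prodB q := by
      rw [← Stmt18Aux.prodB_sortL p, ← Stmt18Aux.prodB_sortL q, heq]
    have hK : K = -J := by omega
    rw [hpB, hK]
    group
  · -- range
    rw [MonoidHom.range_eq_map, ← PresentedGroup.closure_range_of thompsonRels,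
      MonoidHom.map_closure]
    congr 1
    ext y
    constructor
    · rintro ⟨z, ⟨i, rfl⟩, rfl⟩
      fin_cases i
      · left
        simp [PresentedGroup.toGroup.of]
      · right
        simp [PresentedGroup.toGroup.of]
    · rintro (rfl | rfl)
      · exact ⟨_, ⟨0, rfl⟩, by simp [PresentedGroup.toGroup.of]⟩
      · exact ⟨_, ⟨1, rfl⟩, by simp [PresentedGroup.toGroup.of]⟩
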